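/- arXiv:math/0701510 — 3 statements merged into one kernel-verified Lean document; each statement's English description precedes it below -/
import Mathlib

section
/- Let f : ℍ → ℍ be of class C² on an open set Ω of quaternions with nonzero imaginary part, and suppose f can be written as f(p) = u(p) + ι(p)·v(p) with u, v real-valued, and that f satisfies D_l f = −2v/r on Ω. Then the Laplacian of f is both left- and right-regular on Ω, i.e. D_l(Δf) = 0 and D_r(Δf) = 0 on Ω. -/
open Quaternion

noncomputable section

/-- The basis quaternion `i`. -/
def qi : ℍ[ℝ] := ⟨0,1,0,0⟩
/-- The basis quaternion `j`. -/
def qj : ℍ[ℝ] := ⟨0,0,1,0⟩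
/-- The basis quaternion `k`. -/
def qk : ℍ[ℝ] := ⟨0,0,0,1⟩

/-- Partial derivative of `f : ℍ → ℍ` in the real (`t`) direction. -/
def pt (f : ℍ[ℝ] → ℍ[ℝ]) (p : ℍ[ℝ]) : ℍ[ℝ] := fderiv ℝ f p 1
/-- Partial derivative in the `i` (`x`) direction. -/
def px (f : ℍ[ℝ] → ℍ[ℝ]) (p : ℍ[ℝ]) : ℍ[ℝ] := fderiv ℝ f p qi
/-- Partial derivative in the `j` (`y`) direction. -/
def py (f : ℍ[ℝ] → ℍ[ℝ]) (p : ℍ[ℝ]) : ℍ[ℝ] := fderiv ℝ f p qj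
/-- Partial derivative in the `k` (`z`) direction. -/
def pz (f : ℍ[ℝ] → ℍ[ℝ]) (p : ℍ[ℝ]) : ℍ[ℝ] := fderiv ℝ f p qk

/-- The left Fueter operator `D_l f = ∂f/∂t + i ∂f/∂x + j ∂f/∂y + k ∂f/∂z`. -/
def Dl (f : ℍ[ℝ] → ℍ[ℝ]) (p : ℍ[ℝ]) : ℍ[ℝ] :=
  pt f p + qi * px f p + qj * py f p + qk * pz f p
/-- The right Fueter operator `D_r f = ∂f/∂t + (∂f/∂x) i + (∂f/∂y) j + (∂f/∂z) k`. -/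
def Dr (f : ℍ[ℝ] → ℍ[ℝ]) (p : ℍ[ℝ]) : ℍ[ℝ] :=
  pt f p + px f p * qi + py f p * qj + pz f p * qk
/-- The conjugate left Fueter operator `D̄_l f = ∂f/∂t - i ∂f/∂x - j ∂f/∂y - k ∂f/∂z`. -/
def Dlbar (f : ℍ[ℝ] → ℍ[ℝ]) (p : ℍ[ℝ]) : ℍ[ℝ] :=
  pt f p - qi * px f p - qj * py f p - qk * pz f p
/-- The Laplacian `Δf = ∂²f/∂t² + ∂²f/∂x² + ∂²f/∂y² + ∂²f/∂z²`. -/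
def Lap (f : ℍ[ℝ] → ℍ[ℝ]) (p : ℍ[ℝ]) : ℍ[ℝ] :=
  pt (pt f) p + px (px f) p + py (py f) p + pz (pz f) p

/-- `r = √(x² + y² + z²)`, the norm of the imaginary part of `p`. -/
def rad (p : ℍ[ℝ]) : ℝ := Real.sqrt (p.imI^2 + p.imJ^2 + p.imK^2)
/-- `ι(p) = (x i + y j + z k)/r`, the normalized imaginary part of `p`. -/
def iot (p : ℍ[ℝ]) : ℍ[ℝ] := (rad p)⁻¹ • Quaternion.im p

/-!
Put `φ = v / r`, so that `Im f = φ · Im p`; it is `C²` because `φ = ⟨Im f, Im p⟩ / |Im p|²`.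
Since `D̄_l D_l = Δ`, the hypothesis `D_l f = -2φ` gives `Δf = -2 D̄_l φ`. The imaginary part of
this is `2∇φ`, whereas computing directly, `Im Δf = Δ(φ · Im p) = (Δφ) Im p + 2∇φ`; hence `φ` is
harmonic. Finally `D_l D̄_l = Δ`, and for real-valued `φ` also `D_r D̄_l φ = Δφ`, so both
`D_l Δf` and `D_r Δf` equal `-2Δφ = 0`.
-/

open Filter Topology

section SecondDerivative

variable {𝕜 E F G : Type*} [NontriviallyNormedField 𝕜] [NormedAddCommGroup E] [NormedSpace 𝕜 E]
  [NormedAddCommGroup F] [NormedSpace 𝕜 F] [NormedAddCommGroup G] [NormedSpace 𝕜 G]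
  {g : E → F} {p : E}

theorem hasFDerivAt_fderiv_apply (h : DifferentiableAt 𝕜 (fderiv 𝕜 g) p) (b : E) :
    HasFDerivAt (fun q => fderiv 𝕜 g q b) ((fderiv 𝕜 (fderiv 𝕜 g) p).flip b) p := by
  simpa using h.hasFDerivAt.clm_apply (hasFDerivAt_const b p)

theorem fderiv_fderiv_apply (h : DifferentiableAt 𝕜 (fderiv 𝕜 g) p) (a b : E) :
    fderiv 𝕜 (fun q => fderiv 𝕜 g q b) p a = fderiv 𝕜 (fderiv 𝕜 g) p a b := by
  simp [(hasFDerivAt_fderiv_apply h b).fderiv]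

theorem ContDiffAt.differentiableAt_fderiv (hg : ContDiffAt 𝕜 2 g p) :
    DifferentiableAt 𝕜 (fderiv 𝕜 g) p :=
  (hg.fderiv_right (m := 1) le_rfl).differentiableAt one_ne_zero

theorem ContDiffAt.eventually_differentiableAt (hg : ContDiffAt 𝕜 2 g p) :
    ∀ᶠ q in 𝓝 p, DifferentiableAt 𝕜 g q :=
  (hg.eventually (by simp)).mono fun _ hq => hq.differentiableAt two_ne_zero

theorem fderiv_fderiv_clm_comp (L : F →L[𝕜] G) (hg : ContDiffAt 𝕜 2 g p) (a b : E) :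
    fderiv 𝕜 (fderiv 𝕜 (fun q => L (g q))) p a b = L (fderiv 𝕜 (fderiv 𝕜 g) p a b) := by
  have hcomp : fderiv 𝕜 (fun q => L (g q)) =ᶠ[𝓝 p] fun q => L.comp (fderiv 𝕜 g q) :=
    hg.eventually_differentiableAt.mono fun q hq => (L.hasFDerivAt.comp q hq.hasFDerivAt).fderiv
  have hD : HasFDerivAt (fun q => L.comp (fderiv 𝕜 g q))
      ((ContinuousLinearMap.compL 𝕜 E F G L).comp (fderiv 𝕜 (fderiv 𝕜 g) p)) p :=
    (ContinuousLinearMap.compL 𝕜 E F G L).hasFDerivAt.comp p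
      hg.differentiableAt_fderiv.hasFDerivAt
  rw [hcomp.fderiv_eq, hD.fderiv]
  simp

theorem fderiv_fderiv_smul_clm {φ : E → 𝕜} (hφ : ContDiffAt 𝕜 2 φ p) (L : E →L[𝕜] F) (a b : E) :
    fderiv 𝕜 (fderiv 𝕜 (fun q => φ q • L q)) p a b
      = fderiv 𝕜 (fderiv 𝕜 φ) p a b • L p + fderiv 𝕜 φ p b • L a + fderiv 𝕜 φ p a • L b := by
  have hφL : ContDiffAt 𝕜 2 (fun q => φ q • L q) p := hφ.smul L.contDiff.contDiffAt
  have hpartial : (fun q => fderiv 𝕜 (fun q => φ q • L q) q b)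
      =ᶠ[𝓝 p] fun q => fderiv 𝕜 φ q b • L q + φ q • L b :=
    hφ.eventually_differentiableAt.mono fun q hq => by
      have h : HasFDerivAt (fun q => φ q • L q) _ q := hq.hasFDerivAt.smul L.hasFDerivAt
      simp [h.fderiv, add_comm]
  have hD : HasFDerivAt (fun q => fderiv 𝕜 φ q b • L q + φ q • L b) _ p :=
    ((hasFDerivAt_fderiv_apply hφ.differentiableAt_fderiv b).smul L.hasFDerivAt).add
      ((hφ.differentiableAt two_ne_zero).hasFDerivAt.smul_const (L b))
  rw [← fderiv_fderiv_apply hφL.differentiableAt_fderiv, hpartial.fderiv_eq, hD.fderiv]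
  simp only [add_apply, smul_apply, ContinuousLinearMap.smulRight_apply,
    ContinuousLinearMap.flip_apply]
  abel

end SecondDerivative

section HessTrace

def imCLM : ℍ[ℝ] →L[ℝ] ℍ[ℝ] :=
  LinearMap.toContinuousLinearMap
    { toFun := Quaternion.im
      map_add' := Quaternion.im_add
      map_smul' := fun c q => Quaternion.im_smul q c }

@[simp] theorem imCLM_apply (q : ℍ[ℝ]) : imCLM q = q.im := rfl

def ofRealCLM : ℝ →L[ℝ] ℍ[ℝ] := (Algebra.linearMap ℝ ℍ[ℝ]).toContinuousLinearMap

@[simp] theorem ofRealCLM_apply (x : ℝ) : ofRealCLM x = x := rfl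

theorem ContDiffAt.quaternion_ofReal {n : WithTop ℕ∞} {ψ : ℍ[ℝ] → ℝ} {p : ℍ[ℝ]}
    (hψ : ContDiffAt ℝ n ψ p) : ContDiffAt ℝ n (fun q => (ψ q : ℍ[ℝ])) p :=
  ofRealCLM.contDiff.contDiffAt.comp p hψ

@[simp] theorem qi_re : qi.re = 0 := rfl
@[simp] theorem qi_imI : qi.imI = 1 := rfl
@[simp] theorem qi_imJ : qi.imJ = 0 := rfl
@[simp] theorem qi_imK : qi.imK = 0 := rfl
@[simp] theorem qj_re : qj.re = 0 := rfl
@[simp] theorem qj_imI : qj.imI = 0 := rfl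
@[simp] theorem qj_imJ : qj.imJ = 1 := rfl
@[simp] theorem qj_imK : qj.imK = 0 := rfl
@[simp] theorem qk_re : qk.re = 0 := rfl
@[simp] theorem qk_imI : qk.imI = 0 := rfl
@[simp] theorem qk_imJ : qk.imJ = 0 := rfl
@[simp] theorem qk_imK : qk.imK = 1 := rfl

@[simp] theorem im_qi : qi.im = qi := by ext <;> simp
@[simp] theorem im_qj : qj.im = qj := by ext <;> simp
@[simp] theorem im_qk : qk.im = qk := by ext <;> simp

variable {F : Type*} [NormedAddCommGroup F] [NormedSpace ℝ F]

def hessTrace (g : ℍ[ℝ] → F) (p : ℍ[ℝ]) : F :=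
  fderiv ℝ (fderiv ℝ g) p 1 1 + fderiv ℝ (fderiv ℝ g) p qi qi
    + fderiv ℝ (fderiv ℝ g) p qj qj + fderiv ℝ (fderiv ℝ g) p qk qk

theorem hessTrace_congr {g h : ℍ[ℝ] → F} {p : ℍ[ℝ]} (hgh : g =ᶠ[𝓝 p] h) :
    hessTrace g p = hessTrace h p := by
  simp only [hessTrace, hgh.fderiv.fderiv_eq]

theorem hessTrace_clm_comp {G : Type*} [NormedAddCommGroup G] [NormedSpace ℝ G]
    (L : F →L[ℝ] G) {g : ℍ[ℝ] → F} {p : ℍ[ℝ]} (hg : ContDiffAt ℝ 2 g p) :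
    hessTrace (fun q => L (g q)) p = L (hessTrace g p) := by
  simp only [hessTrace, fderiv_fderiv_clm_comp L hg, map_add]

theorem hessTrace_smul_im {φ : ℍ[ℝ] → ℝ} {p : ℍ[ℝ]} (hφ : ContDiffAt ℝ 2 φ p) :
    hessTrace (fun q => φ q • q.im) p
      = hessTrace φ p • p.im + (2 : ℝ) • (fderiv ℝ φ p qi • qi + fderiv ℝ φ p qj • qj
        + fderiv ℝ φ p qk • qk) := by
  simp only [hessTrace, ← imCLM_apply, fderiv_fderiv_smul_clm hφ imCLM]
  simp only [imCLM_apply, im_qi, im_qj, im_qk, Quaternion.im_one, smul_zero, add_zero]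
  module

theorem Lap_eq_hessTrace {g : ℍ[ℝ] → ℍ[ℝ]} {p : ℍ[ℝ]} (hg : ContDiffAt ℝ 2 g p) :
    Lap g p = hessTrace g p := by
  simp only [Lap, hessTrace, ← fderiv_fderiv_apply hg.differentiableAt_fderiv]
  rfl

theorem Lap_ofReal {ψ : ℍ[ℝ] → ℝ} {p : ℍ[ℝ]} (hψ : ContDiffAt ℝ 2 ψ p) :
    Lap (fun q => (ψ q : ℍ[ℝ])) p = hessTrace ψ p := by
  rw [Lap_eq_hessTrace hψ.quaternion_ofReal]
  exact hessTrace_clm_comp ofRealCLM hψ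

theorem hessTrace_const_mul (c : ℝ) {φ : ℍ[ℝ] → ℝ} {p : ℍ[ℝ]} (hφ : ContDiffAt ℝ 2 φ p) :
    hessTrace (fun q => c * φ q) p = c * hessTrace φ p :=
  hessTrace_clm_comp (ContinuousLinearMap.mul ℝ ℝ c) hφ

end HessTrace

section Fueter

variable {g : ℍ[ℝ] → ℍ[ℝ]} {p : ℍ[ℝ]}

theorem fderiv_Dl_apply (h : DifferentiableAt ℝ (fderiv ℝ g) p) (a : ℍ[ℝ]) :
    fderiv ℝ (Dl g) p a = fderiv ℝ (fderiv ℝ g) p a 1 + qi * fderiv ℝ (fderiv ℝ g) p a qi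
      + qj * fderiv ℝ (fderiv ℝ g) p a qj + qk * fderiv ℝ (fderiv ℝ g) p a qk := by
  have hD : HasFDerivAt (Dl g) _ p :=
    (((hasFDerivAt_fderiv_apply h 1).add ((hasFDerivAt_fderiv_apply h qi).const_mul qi)).add
      ((hasFDerivAt_fderiv_apply h qj).const_mul qj)).add
      ((hasFDerivAt_fderiv_apply h qk).const_mul qk)
  simp [hD.fderiv]

theorem fderiv_Dlbar_apply (h : DifferentiableAt ℝ (fderiv ℝ g) p) (a : ℍ[ℝ]) :
    fderiv ℝ (Dlbar g) p a = fderiv ℝ (fderiv ℝ g) p a 1 - qi * fderiv ℝ (fderiv ℝ g) p a qi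
      - qj * fderiv ℝ (fderiv ℝ g) p a qj - qk * fderiv ℝ (fderiv ℝ g) p a qk := by
  have hD : HasFDerivAt (Dlbar g) _ p :=
    (((hasFDerivAt_fderiv_apply h 1).sub ((hasFDerivAt_fderiv_apply h qi).const_mul qi)).sub
      ((hasFDerivAt_fderiv_apply h qj).const_mul qj)).sub
      ((hasFDerivAt_fderiv_apply h qk).const_mul qk)
  simp [hD.fderiv]

theorem Dlbar_Dl (hg : ContDiffAt ℝ 2 g p) : Dlbar (Dl g) p = Lap g p := by
  have hs := hg.isSymmSndFDerivAt (by simp)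
  rw [Lap_eq_hessTrace hg]
  simp only [Dlbar, pt, px, py, pz, fderiv_Dl_apply hg.differentiableAt_fderiv, hessTrace]
  rw [hs qi 1, hs qj 1, hs qk 1, hs qj qi, hs qk qi, hs qk qj]
  ext <;> simp [Quaternion.re_mul, Quaternion.imI_mul, Quaternion.imJ_mul,
    Quaternion.imK_mul] <;> ring

theorem Dl_Dlbar (hg : ContDiffAt ℝ 2 g p) : Dl (Dlbar g) p = Lap g p := by
  have hs := hg.isSymmSndFDerivAt (by simp)
  rw [Lap_eq_hessTrace hg]
  simp only [Dl, pt, px, py, pz, fderiv_Dlbar_apply hg.differentiableAt_fderiv, hessTrace]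
  rw [hs qi 1, hs qj 1, hs qk 1, hs qj qi, hs qk qi, hs qk qj]
  ext <;> simp [Quaternion.re_mul, Quaternion.imI_mul, Quaternion.imJ_mul,
    Quaternion.imK_mul] <;> ring

theorem Dr_Dlbar_ofReal {ψ : ℍ[ℝ] → ℝ} (hψ : ContDiffAt ℝ 2 ψ p) :
    Dr (Dlbar fun q => (ψ q : ℍ[ℝ])) p = Lap (fun q => (ψ q : ℍ[ℝ])) p := by
  have hΨ : ContDiffAt ℝ 2 (fun q => (ψ q : ℍ[ℝ])) p := hψ.quaternion_ofReal
  have hreal (a b : ℍ[ℝ]) : fderiv ℝ (fderiv ℝ fun q => (ψ q : ℍ[ℝ])) p a b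
      = (fderiv ℝ (fderiv ℝ ψ) p a b : ℍ[ℝ]) :=
    fderiv_fderiv_clm_comp ofRealCLM hψ a b
  have hs := hψ.isSymmSndFDerivAt (by simp)
  rw [Lap_ofReal hψ]
  simp only [Dr, pt, px, py, pz, fderiv_Dlbar_apply hΨ.differentiableAt_fderiv, hessTrace, hreal]
  rw [hs qi 1, hs qj 1, hs qk 1, hs qj qi, hs qk qi, hs qk qj]
  ext <;> simp [Quaternion.re_mul, Quaternion.imI_mul, Quaternion.imJ_mul,
    Quaternion.imK_mul]

theorem Dl_congr {h : ℍ[ℝ] → ℍ[ℝ]} (hgh : g =ᶠ[𝓝 p] h) : Dl g p = Dl h p := by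
  simp only [Dl, pt, px, py, pz, hgh.fderiv_eq]

theorem Dr_congr {h : ℍ[ℝ] → ℍ[ℝ]} (hgh : g =ᶠ[𝓝 p] h) : Dr g p = Dr h p := by
  simp only [Dr, pt, px, py, pz, hgh.fderiv_eq]

theorem Dlbar_congr {h : ℍ[ℝ] → ℍ[ℝ]} (hgh : g =ᶠ[𝓝 p] h) : Dlbar g p = Dlbar h p := by
  simp only [Dlbar, pt, px, py, pz, hgh.fderiv_eq]

theorem Dlbar_ofReal {ψ : ℍ[ℝ] → ℝ} (hψ : DifferentiableAt ℝ ψ p) :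
    Dlbar (fun q => (ψ q : ℍ[ℝ])) p = (fderiv ℝ ψ p 1 : ℍ[ℝ]) - fderiv ℝ ψ p qi • qi
      - fderiv ℝ ψ p qj • qj - fderiv ℝ ψ p qk • qk := by
  have hΨ : HasFDerivAt (fun q => ofRealCLM (ψ q)) (ofRealCLM.comp (fderiv ℝ ψ p)) p :=
    ofRealCLM.hasFDerivAt.comp p hψ.hasFDerivAt
  simp only [Dlbar, pt, px, py, pz, ← ofRealCLM_apply, hΨ.fderiv]
  simp [Quaternion.coe_mul_eq_smul, ← Quaternion.coe_commutes]

end Fueter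

def imCoeff (f : ℍ[ℝ] → ℍ[ℝ]) (q : ℍ[ℝ]) : ℝ := inner ℝ (f q).im q.im / ‖q.im‖ ^ 2

theorem imCoeff_eq_of_im_eq {f : ℍ[ℝ] → ℍ[ℝ]} {q : ℍ[ℝ]} {c : ℝ} (h : (f q).im = c • q.im)
    (hq : q.im ≠ 0) : imCoeff f q = c := by
  rw [imCoeff, h, real_inner_smul_left, real_inner_self_eq_norm_sq, mul_div_assoc,
    div_self (by positivity), mul_one]

theorem ContDiffAt.imCoeff {n : WithTop ℕ∞} {f : ℍ[ℝ] → ℍ[ℝ]} {q : ℍ[ℝ]}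
    (hf : ContDiffAt ℝ n f q) (hq : q.im ≠ 0) : ContDiffAt ℝ n (imCoeff f) q :=
  ((imCLM.contDiff.contDiffAt.comp q hf).inner ℝ imCLM.contDiff.contDiffAt).div
    (imCLM.contDiff.contDiffAt.norm_sq ℝ) (by simpa using hq)

theorem im_coe_add_iot_mul (u v : ℝ) (p : ℍ[ℝ]) :
    ((u : ℍ[ℝ]) + iot p * (v : ℍ[ℝ])).im = (v / rad p) • p.im := by
  simp [iot, Quaternion.mul_coe_eq_smul, smul_smul, div_eq_inv_mul, mul_comm]

theorem hessTrace_eq_zero_of_Dl_eq {f : ℍ[ℝ] → ℍ[ℝ]} {φ : ℍ[ℝ] → ℝ} {p : ℍ[ℝ]}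
    (hf : ContDiffAt ℝ 2 f p) (hφ : ContDiffAt ℝ 2 φ p) (hp : p.im ≠ 0)
    (him : ∀ᶠ q in 𝓝 p, (f q).im = φ q • q.im)
    (hDl : ∀ᶠ q in 𝓝 p, Dl f q = ((-2 * φ q : ℝ) : ℍ[ℝ])) : hessTrace φ p = 0 := by
  have hIm : (Lap f p).im = hessTrace φ p • p.im + (2 : ℝ) • (fderiv ℝ φ p qi • qi
      + fderiv ℝ φ p qj • qj + fderiv ℝ φ p qk • qk) := by
    rw [Lap_eq_hessTrace hf, ← imCLM_apply, ← hessTrace_clm_comp imCLM hf,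
      hessTrace_congr (g := fun q => imCLM (f q)) him, hessTrace_smul_im hφ]
  have hψ : DifferentiableAt ℝ (fun q => -2 * φ q) p :=
    (hφ.differentiableAt two_ne_zero).const_mul (-2)
  rw [← Dlbar_Dl hf, Dlbar_congr hDl, Dlbar_ofReal hψ,
    fderiv_const_mul (hφ.differentiableAt two_ne_zero)] at hIm
  have hzero : hessTrace φ p • p.im = 0 := by
    simp only [smul_apply, smul_eq_mul, Quaternion.im_sub, Quaternion.im_coe,
      Quaternion.im_smul, im_qi, im_qj, im_qk] at hIm
    linear_combination (norm := module) -hIm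
  exact (smul_eq_zero.1 hzero).resolve_right hp

/-- If `f` is `C²` on an open set `Ω` of quaternions with nonzero imaginary
part, has the form `f = u + ι v` with `u, v` real-valued, and satisfies `D_l f = -2v/r` on `Ω`,
then `Δf` is left- and right-regular on `Ω`. -/
theorem fueter_theorem_general (Ω : Set ℍ[ℝ]) (hΩ : IsOpen Ω)
    (hΩim : ∀ p ∈ Ω, Quaternion.im p ≠ 0)
    (f : ℍ[ℝ] → ℍ[ℝ]) (hf : ContDiffOn ℝ 2 f Ω)
    (u v : ℍ[ℝ] → ℝ)
    (hform : ∀ p ∈ Ω, f p = (u p : ℍ[ℝ]) + iot p * (v p : ℍ[ℝ]))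
    (hDl : ∀ p ∈ Ω, Dl f p = ((-2 * v p / rad p : ℝ) : ℍ[ℝ])) :
    ∀ p ∈ Ω, Dl (Lap f) p = 0 ∧ Dr (Lap f) p = 0 := by
  have hfC2 (q) (hq : q ∈ Ω) : ContDiffAt ℝ 2 f q := hf.contDiffAt (hΩ.mem_nhds hq)
  have hφC2 (q) (hq : q ∈ Ω) : ContDiffAt ℝ 2 (imCoeff f) q := (hfC2 q hq).imCoeff (hΩim q hq)
  have hfim (q) (hq : q ∈ Ω) : (f q).im = (v q / rad q) • q.im := by
    rw [hform q hq, im_coe_add_iot_mul]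
  have hφ (q) (hq : q ∈ Ω) : imCoeff f q = v q / rad q :=
    imCoeff_eq_of_im_eq (hfim q hq) (hΩim q hq)
  have hDlφ (q) (hq : q ∈ Ω) : ∀ᶠ q' in 𝓝 q, Dl f q' = ((-2 * imCoeff f q' : ℝ) : ℍ[ℝ]) := by
    filter_upwards [hΩ.mem_nhds hq] with q' hq'
    rw [hDl q' hq', hφ q' hq', mul_div_assoc]
  intro p hp
  have hLap : Lap f =ᶠ[𝓝 p] Dlbar fun q => ((-2 * imCoeff f q : ℝ) : ℍ[ℝ]) := by
    filter_upwards [hΩ.mem_nhds hp] with q hq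
    rw [← Dlbar_Dl (hfC2 q hq), Dlbar_congr (hDlφ q hq)]
  have hharm : hessTrace (imCoeff f) p = 0 := by
    refine hessTrace_eq_zero_of_Dl_eq (hfC2 p hp) (hφC2 p hp) (hΩim p hp) ?_ (hDlφ p hp)
    filter_upwards [hΩ.mem_nhds hp] with q hq
    rw [hfim q hq, hφ q hq]
  have hψ : ContDiffAt ℝ 2 (fun q => -2 * imCoeff f q) p := contDiffAt_const.mul (hφC2 p hp)
  have hLapψ : Lap (fun q => ((-2 * imCoeff f q : ℝ) : ℍ[ℝ])) p = 0 := by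
    rw [Lap_ofReal hψ, hessTrace_const_mul _ (hφC2 p hp), hharm, mul_zero, Quaternion.coe_zero]
  exact ⟨by rw [Dl_congr hLap, Dl_Dlbar hψ.quaternion_ofReal, hLapψ],
    by rw [Dr_congr hLap, Dr_Dlbar_ofReal hψ, hLapψ]⟩
end
end

section
/- Let u, v be real-valued C¹ functions of (α,β) on a region where sin β ≠ 0, and let F = u + ι(α,β)·v. Then ∂F/∂ιₗ = 2v holds if and only if the Cauchy–Riemann type system (1/sin β)·∂u/∂α = ∂v/∂β and (1/sin β)·∂v/∂α = −∂u/∂β holds. -/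
open Quaternion

noncomputable section

/-- `ι(α,β) = cos α sin β · i + sin α sin β · j + cos β · k`, a unit imaginary quaternion. -/
def iota (α β : ℝ) : ℍ[ℝ] :=
  ⟨0, Real.cos α * Real.sin β, Real.sin α * Real.sin β, Real.cos β⟩
/-- `ι_α = ∂ι/∂α`. -/
def iotaA (α β : ℝ) : ℍ[ℝ] := deriv (fun a => iota a β) α
/-- `ι_β = ∂ι/∂β`. -/
def iotaB (α β : ℝ) : ℍ[ℝ] := deriv (fun b => iota α b) β

/-- Partial derivative in `α` of a quaternion-valued function of `(α,β)`. -/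
def pA (g : ℝ → ℝ → ℍ[ℝ]) (α β : ℝ) : ℍ[ℝ] := deriv (fun a => g a β) α
/-- Partial derivative in `β` of a quaternion-valued function of `(α,β)`. -/
def pB (g : ℝ → ℝ → ℍ[ℝ]) (α β : ℝ) : ℍ[ℝ] := deriv (fun b => g α b) β
/-- The left angular derivative `∂g/∂ιₗ := ι_α⁻¹ (∂g/∂α) + ι_β⁻¹ (∂g/∂β)`. -/
def DI (g : ℝ → ℝ → ℍ[ℝ]) (α β : ℝ) : ℍ[ℝ] :=
  (iotaA α β)⁻¹ * pA g α β + (iotaB α β)⁻¹ * pB g α β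

/-! Write `e_α := azimuthalUnit α = ι_α / sin β` and `e_β := polarUnit α β = ι_β`. Then
`(ι, e_β, e_α)` is the orthonormal spherical frame, so as pure unit quaternions
`e_α² = e_β² = -1`, `e_α ι = e_β` and `e_β ι = -e_α`. Since `u`, `v` are real they commute with
everything, and the product rule together with these relations gives
`∂F/∂ιₗ = 2v + (∂v/∂β - (1/sin β) ∂u/∂α) e_α - (∂u/∂β + (1/sin β) ∂v/∂α) e_β`.
As `e_α` and `e_β` are linearly independent, `∂F/∂ιₗ = 2v` is exactly the Cauchy–Riemann
system. -/

open Real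

theorem Quaternion.hasDerivAt_of_components {f : ℝ → ℍ[ℝ]} {f' : ℍ[ℝ]} {x : ℝ}
    (h₀ : HasDerivAt (fun t => (f t).re) f'.re x) (h₁ : HasDerivAt (fun t => (f t).imI) f'.imI x)
    (h₂ : HasDerivAt (fun t => (f t).imJ) f'.imJ x)
    (h₃ : HasDerivAt (fun t => (f t).imK) f'.imK x) :
    HasDerivAt f f' x := by
  let b : Module.Basis (Fin 4) ℝ ℍ[ℝ] := QuaternionAlgebra.basisOneIJK _ _ _
  have hrepr (i : Fin 4) : HasDerivAt (fun t => b.repr (f t) i) (b.repr f' i) x := by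
    fin_cases i
    exacts [h₀, h₁, h₂, h₃]
  simpa only [b.sum_repr] using
    HasDerivAt.fun_sum (u := Finset.univ) fun i _ => (hrepr i).smul_const (b i)

theorem HasDerivAt.coe_quaternion {f : ℝ → ℝ} {f' x : ℝ} (h : HasDerivAt f f' x) :
    HasDerivAt (fun t => (f t : ℍ[ℝ])) (f' : ℍ[ℝ]) x := by
  simpa [← Quaternion.coe_one, Quaternion.smul_coe] using h.smul_const (1 : ℍ[ℝ])

theorem DifferentiableAt.hasDerivAt_uncurry_left {E : Type*} [NormedAddCommGroup E]
    [NormedSpace ℝ E] {f : ℝ → ℝ → E} {a b : ℝ}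
    (h : DifferentiableAt ℝ (fun x : ℝ × ℝ => f x.1 x.2) (a, b)) :
    HasDerivAt (fun t => f t b) (deriv (fun t => f t b) a) a :=
  (h.comp (f := fun t => (t, b)) a
    (differentiableAt_id.prodMk (differentiableAt_const b))).hasDerivAt

theorem DifferentiableAt.hasDerivAt_uncurry_right {E : Type*} [NormedAddCommGroup E]
    [NormedSpace ℝ E] {f : ℝ → ℝ → E} {a b : ℝ}
    (h : DifferentiableAt ℝ (fun x : ℝ × ℝ => f x.1 x.2) (a, b)) :
    HasDerivAt (fun t => f a t) (deriv (fun t => f a t) b) b :=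
  (h.comp (f := fun t => (a, t)) b
    ((differentiableAt_const a).prodMk differentiableAt_id)).hasDerivAt

theorem inv_eq_neg_of_mul_self_eq_neg_one {D : Type*} [DivisionRing D] {e : D}
    (he : e * e = -1) : e⁻¹ = -e :=
  inv_eq_of_mul_eq_one_right (by rw [mul_neg, he, neg_neg])

def azimuthalUnit (α : ℝ) : ℍ[ℝ] := ⟨0, -sin α, cos α, 0⟩

def polarUnit (α β : ℝ) : ℍ[ℝ] := ⟨0, cos α * cos β, sin α * cos β, -sin β⟩

theorem hasDerivAt_iota_left (α β : ℝ) :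
    HasDerivAt (fun a => iota a β) (sin β • azimuthalUnit α) α := by
  refine Quaternion.hasDerivAt_of_components ?_ ?_ ?_ ?_ <;>
    simp only [Quaternion.re_smul, Quaternion.imI_smul, Quaternion.imJ_smul, Quaternion.imK_smul,
      smul_eq_mul] <;> dsimp only [iota, azimuthalUnit]
  · simpa using hasDerivAt_const α (0 : ℝ)
  · simpa [mul_comm] using (hasDerivAt_cos α).mul_const (sin β)
  · simpa [mul_comm] using (hasDerivAt_sin α).mul_const (sin β)
  · simpa using hasDerivAt_const α (cos β)

theorem hasDerivAt_iota_right (α β : ℝ) :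
    HasDerivAt (fun b => iota α b) (polarUnit α β) β :=
  Quaternion.hasDerivAt_of_components (hasDerivAt_const β 0)
    ((hasDerivAt_sin β).const_mul (cos α)) ((hasDerivAt_sin β).const_mul (sin α))
    (hasDerivAt_cos β)

section Frame

open Quaternion

theorem azimuthalUnit_mul_self (α : ℝ) : azimuthalUnit α * azimuthalUnit α = -1 := by
  ext <;> simp only [re_mul, imI_mul, imJ_mul, imK_mul] <;> simp [azimuthalUnit] <;>
    grind [sin_sq_add_cos_sq]

theorem polarUnit_mul_self (α β : ℝ) : polarUnit α β * polarUnit α β = -1 := by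
  ext <;> simp only [re_mul, imI_mul, imJ_mul, imK_mul] <;> simp [polarUnit] <;>
    grind [sin_sq_add_cos_sq]

theorem azimuthalUnit_mul_iota (α β : ℝ) : azimuthalUnit α * iota α β = polarUnit α β := by
  ext <;> simp only [re_mul, imI_mul, imJ_mul, imK_mul] <;>
    simp [azimuthalUnit, polarUnit, iota]
  all_goals grind [sin_sq_add_cos_sq]

theorem polarUnit_mul_iota (α β : ℝ) : polarUnit α β * iota α β = -azimuthalUnit α := by
  ext <;> simp only [re_mul, imI_mul, imJ_mul, imK_mul, re_neg, imI_neg, imJ_neg, imK_neg] <;>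
    simp [azimuthalUnit, polarUnit, iota]
  all_goals grind [sin_sq_add_cos_sq]

end Frame

theorem linearIndependent_azimuthalUnit_polarUnit (α β : ℝ) :
    LinearIndependent ℝ ![azimuthalUnit α, polarUnit α β] := by
  refine LinearIndependent.pair_iff.2 fun a b h => ?_
  have hI := congrArg (·.imI) h
  have hJ := congrArg (·.imJ) h
  have hK := congrArg (·.imK) h
  simp only [Quaternion.imI_add, Quaternion.imJ_add, Quaternion.imK_add, Quaternion.imI_smul,
    Quaternion.imJ_smul, Quaternion.imK_smul, smul_eq_mul, Quaternion.imI_zero,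
    Quaternion.imJ_zero, Quaternion.imK_zero] at hI hJ hK
  simp only [azimuthalUnit, polarUnit] at hI hJ hK
  constructor
  · linear_combination (-sin α) * hI + cos α * hJ - a * sin_sq_add_cos_sq α
  · linear_combination cos β * cos α * hI + cos β * sin α * hJ - sin β * hK
      - b * cos β ^ 2 * sin_sq_add_cos_sq α - b * sin_sq_add_cos_sq β

theorem DI_coe_add_iota_mul_coe {u v : ℝ → ℝ → ℝ} {α β uα uβ vα vβ : ℝ} (hs : sin β ≠ 0)
    (hua : HasDerivAt (fun a => u a β) uα α) (hub : HasDerivAt (fun b => u α b) uβ β)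
    (hva : HasDerivAt (fun a => v a β) vα α) (hvb : HasDerivAt (fun b => v α b) vβ β) :
    DI (fun a b => (u a b : ℍ[ℝ]) + iota a b * (v a b : ℍ[ℝ])) α β
      = ((2 * v α β : ℝ) : ℍ[ℝ]) + ((vβ - (sin β)⁻¹ * uα) • azimuthalUnit α
          + (-(uβ + (sin β)⁻¹ * vα)) • polarUnit α β) := by
  rw [DI, iotaA, iotaB, pA, pB, (hasDerivAt_iota_left α β).deriv,
    (hasDerivAt_iota_right α β).deriv,
    (hua.coe_quaternion.fun_add ((hasDerivAt_iota_left α β).fun_mul hva.coe_quaternion)).deriv,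
    (hub.coe_quaternion.fun_add ((hasDerivAt_iota_right α β).fun_mul hvb.coe_quaternion)).deriv,
    smul_inv₀, inv_eq_neg_of_mul_self_eq_neg_one (azimuthalUnit_mul_self α),
    inv_eq_neg_of_mul_self_eq_neg_one (polarUnit_mul_self α β),
    show ((2 * v α β : ℝ) : ℍ[ℝ]) = (2 * v α β) • 1 by rw [← Quaternion.coe_mul_eq_smul, mul_one]]
  simp only [mul_add, Quaternion.mul_coe_eq_smul, smul_mul_assoc, mul_smul_comm, neg_mul,
    azimuthalUnit_mul_self, polarUnit_mul_self, azimuthalUnit_mul_iota, polarUnit_mul_iota]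
  match_scalars <;> field_simp <;> ring

/-- For real-valued `C¹` functions `u, v` of `(α,β)` on a region where
`sin β ≠ 0` and `F = u + ι v`, the equation `∂F/∂ιₗ = 2v` holds iff the Cauchy–Riemann type
system `(1/sin β) ∂u/∂α = ∂v/∂β` and `(1/sin β) ∂v/∂α = -∂u/∂β` holds. -/
theorem angular_deriv_eq_iff_CR (S : Set (ℝ × ℝ)) (hS : IsOpen S)
    (hSsin : ∀ x ∈ S, Real.sin x.2 ≠ 0)
    (u v : ℝ → ℝ → ℝ)
    (hu : ContDiffOn ℝ 1 (fun x : ℝ × ℝ => u x.1 x.2) S)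
    (hv : ContDiffOn ℝ 1 (fun x : ℝ × ℝ => v x.1 x.2) S) :
    ∀ x ∈ S,
      (DI (fun a b => ((u a b : ℝ) : ℍ[ℝ]) + iota a b * ((v a b : ℝ) : ℍ[ℝ])) x.1 x.2
          = ((2 * v x.1 x.2 : ℝ) : ℍ[ℝ]))
      ↔ ((Real.sin x.2)⁻¹ * deriv (fun a => u a x.2) x.1 = deriv (fun b => v x.1 b) x.2 ∧
         (Real.sin x.2)⁻¹ * deriv (fun a => v a x.2) x.1 = - deriv (fun b => u x.1 b) x.2) := by
  rintro ⟨α, β⟩ hx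
  have hs : sin β ≠ 0 := hSsin (α, β) hx
  have hud := (hu.differentiableOn one_ne_zero).differentiableAt (hS.mem_nhds hx)
  have hvd := (hv.differentiableOn one_ne_zero).differentiableAt (hS.mem_nhds hx)
  rw [DI_coe_add_iota_mul_coe hs hud.hasDerivAt_uncurry_left hud.hasDerivAt_uncurry_right
    hvd.hasDerivAt_uncurry_left hvd.hasDerivAt_uncurry_right, add_eq_left]
  constructor
  · intro h
    obtain ⟨h₁, h₂⟩ := LinearIndependent.pair_iff.1
      (linearIndependent_azimuthalUnit_polarUnit α β) _ _ h
    constructor <;> linarith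
  · rintro ⟨h₁, h₂⟩
    rw [← h₁, h₂]
    simp
end
end

section
/- Let F be any quaternion-valued C¹ function of (α,β) on a region where sin β ≠ 0. Then ∂(ι·F)/∂ιₗ = 2F − ι·(∂F/∂ιₗ), where ι = ι(α,β). -/
/-!
Differentiating `ι * ι = -1` shows that `ι_α` and `ι_β` anticommute with `ι`, hence so do their
inverses. The product rule then gives `ι_α⁻¹ ∂_α(ιF) = F - ι ι_α⁻¹ ∂_α F`, and likewise for `β`;
adding the two identities yields the claim.
-/

open Quaternion

noncomputable section

theorem inv_mul_eq_neg_mul_inv_of_anticomm {K : Type*} [DivisionRing K] {a q : K}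
    (h : q * a + a * q = 0) : q⁻¹ * a = -(a * q⁻¹) := by
  have hsemiconj : SemiconjBy a q (-q) := by
    rw [SemiconjBy, neg_mul, eq_neg_iff_add_eq_zero, add_comm, h]
  rw [hsemiconj.inv_right₀, inv_neg, neg_mul, neg_neg]

theorem inv_mul_mul_add_mul_of_anticomm {K : Type*} [DivisionRing K] {q a f g : K}
    (hq : q ≠ 0) (h : q * a + a * q = 0) : q⁻¹ * (q * f + a * g) = f - a * (q⁻¹ * g) := by
  rw [mul_add, ← mul_assoc, inv_mul_cancel₀ hq, one_mul, ← mul_assoc,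
    inv_mul_eq_neg_mul_inv_of_anticomm h, neg_mul, mul_assoc, sub_eq_add_neg]

theorem HasDerivAt.mul_add_mul_eq_zero_of_mul_self_eq {𝕜 𝔸 : Type*} [NontriviallyNormedField 𝕜]
    [NormedRing 𝔸] [NormedAlgebra 𝕜 𝔸] {g : 𝕜 → 𝔸} {g' c : 𝔸} {t : 𝕜}
    (hg : HasDerivAt g g' t) (hc : ∀ s, g s * g s = c) : g' * g t + g t * g' = 0 := by
  have hsq := hg.mul hg
  rw [show g * g = fun _ => c from funext hc] at hsq
  exact hsq.unique (hasDerivAt_const t c)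

theorem Quaternion.hasDerivAt_mk {f₀ f₁ f₂ f₃ : ℝ → ℝ} {d₀ d₁ d₂ d₃ t : ℝ}
    (h₀ : HasDerivAt f₀ d₀ t) (h₁ : HasDerivAt f₁ d₁ t) (h₂ : HasDerivAt f₂ d₂ t)
    (h₃ : HasDerivAt f₃ d₃ t) :
    HasDerivAt (F := ℍ[ℝ]) (fun s => ⟨f₀ s, f₁ s, f₂ s, f₃ s⟩) ⟨d₀, d₁, d₂, d₃⟩ t := by
  let L : (Fin 4 → ℝ) →L[ℝ] ℍ[ℝ] :=
    linearIsometryEquivTuple.symm.toContinuousLinearEquiv.toContinuousLinearMap ∘L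
      (PiLp.continuousLinearEquiv 2 ℝ fun _ : Fin 4 => ℝ).symm.toContinuousLinearMap
  have hv : HasDerivAt (fun s => ![f₀ s, f₁ s, f₂ s, f₃ s]) ![d₀, d₁, d₂, d₃] t := by
    refine hasDerivAt_pi.2 fun i => ?_
    fin_cases i <;> assumption
  exact L.hasFDerivAt.comp_hasDerivAt t hv

open Real

theorem normSq_iota (α β : ℝ) : normSq (iota α β) = 1 := by
  rw [normSq_def']
  simp only [iota]
  linear_combination sin β ^ 2 * cos_sq_add_sin_sq α + sin_sq_add_cos_sq β

theorem iota_mul_self (α β : ℝ) : iota α β * iota α β = -1 := by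
  rw [← sq, sq_eq_neg_normSq.2 rfl, normSq_iota, coe_one]

theorem hasDerivAt_iota_fst (α β : ℝ) :
    HasDerivAt (fun a => iota a β) ⟨0, -sin α * sin β, cos α * sin β, 0⟩ α :=
  Quaternion.hasDerivAt_mk (hasDerivAt_const α 0) ((hasDerivAt_cos α).mul_const (sin β))
    ((hasDerivAt_sin α).mul_const (sin β)) (hasDerivAt_const α (cos β))

theorem hasDerivAt_iota_snd (α β : ℝ) :
    HasDerivAt (fun b => iota α b) ⟨0, cos α * cos β, sin α * cos β, -sin β⟩ β :=
  Quaternion.hasDerivAt_mk (hasDerivAt_const β 0) ((hasDerivAt_sin β).const_mul (cos α))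
    ((hasDerivAt_sin β).const_mul (sin α)) (hasDerivAt_cos β)

theorem iotaA_eq (α β : ℝ) : iotaA α β = ⟨0, -sin α * sin β, cos α * sin β, 0⟩ :=
  (hasDerivAt_iota_fst α β).deriv

theorem iotaB_eq (α β : ℝ) : iotaB α β = ⟨0, cos α * cos β, sin α * cos β, -sin β⟩ :=
  (hasDerivAt_iota_snd α β).deriv

theorem hasDerivAt_iotaA (α β : ℝ) : HasDerivAt (fun a => iota a β) (iotaA α β) α :=
  iotaA_eq α β ▸ hasDerivAt_iota_fst α β

theorem hasDerivAt_iotaB (α β : ℝ) : HasDerivAt (fun b => iota α b) (iotaB α β) β :=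
  iotaB_eq α β ▸ hasDerivAt_iota_snd α β

theorem iotaA_ne_zero {α β : ℝ} (hβ : sin β ≠ 0) : iotaA α β ≠ 0 := by
  rw [iotaA_eq]
  intro h
  have hI : -sin α * sin β = 0 := congrArg QuaternionAlgebra.imI h
  have hJ : cos α * sin β = 0 := congrArg QuaternionAlgebra.imJ h
  have hsq : sin β ^ 2 = 0 := by
    linear_combination
      (-sin α * sin β) * hI + (cos α * sin β) * hJ - sin β ^ 2 * sin_sq_add_cos_sq α
  exact hβ (pow_eq_zero_iff two_ne_zero |>.1 hsq)

theorem iotaB_ne_zero {α β : ℝ} (hβ : sin β ≠ 0) : iotaB α β ≠ 0 := by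
  rw [iotaB_eq]
  intro h
  have hK : -sin β = 0 := congrArg QuaternionAlgebra.imK h
  exact hβ (neg_eq_zero.1 hK)

theorem iotaA_mul_iota_add_iota_mul_iotaA (α β : ℝ) :
    iotaA α β * iota α β + iota α β * iotaA α β = 0 :=
  (hasDerivAt_iotaA α β).mul_add_mul_eq_zero_of_mul_self_eq fun a => iota_mul_self a β

theorem iotaB_mul_iota_add_iota_mul_iotaB (α β : ℝ) :
    iotaB α β * iota α β + iota α β * iotaB α β = 0 :=
  (hasDerivAt_iotaB α β).mul_add_mul_eq_zero_of_mul_self_eq fun b => iota_mul_self α b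

theorem pA_iota_mul {F : ℝ → ℝ → ℍ[ℝ]} {α β : ℝ}
    (hF : DifferentiableAt ℝ (fun a => F a β) α) :
    pA (fun a b => iota a b * F a b) α β = iotaA α β * F α β + iota α β * pA F α β :=
  ((hasDerivAt_iotaA α β).mul hF.hasDerivAt).deriv

theorem pB_iota_mul {F : ℝ → ℝ → ℍ[ℝ]} {α β : ℝ}
    (hF : DifferentiableAt ℝ (fun b => F α b) β) :
    pB (fun a b => iota a b * F a b) α β = iotaB α β * F α β + iota α β * pB F α β :=
  ((hasDerivAt_iotaB α β).mul hF.hasDerivAt).deriv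

/-- For any quaternion-valued `C¹` function `F` of `(α,β)` on a region where
`sin β ≠ 0`, we have `∂(ι F)/∂ιₗ = 2F - ι (∂F/∂ιₗ)`. -/
theorem angular_deriv_iota_mul (S : Set (ℝ × ℝ)) (hS : IsOpen S)
    (hSsin : ∀ x ∈ S, Real.sin x.2 ≠ 0)
    (F : ℝ → ℝ → ℍ[ℝ])
    (hF : ContDiffOn ℝ 1 (fun x : ℝ × ℝ => F x.1 x.2) S) :
    ∀ x ∈ S,
      DI (fun a b => iota a b * F a b) x.1 x.2
        = (2 : ℍ[ℝ]) * F x.1 x.2 - iota x.1 x.2 * DI F x.1 x.2 := by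
  rintro ⟨α, β⟩ hx
  have hF' : DifferentiableAt ℝ (fun x : ℝ × ℝ => F x.1 x.2) (α, β) :=
    (hF.differentiableOn one_ne_zero).differentiableAt (hS.mem_nhds hx)
  have hFα : DifferentiableAt ℝ (fun a => F a β) α :=
    hF'.comp (f := fun a => (a, β)) α (differentiableAt_id.prodMk (differentiableAt_const β))
  have hFβ : DifferentiableAt ℝ (fun b => F α b) β :=
    hF'.comp (f := fun b => (α, b)) β ((differentiableAt_const α).prodMk differentiableAt_id)
  have hβ : sin β ≠ 0 := hSsin (α, β) hx
  rw [DI, pA_iota_mul hFα, pB_iota_mul hFβ,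
    inv_mul_mul_add_mul_of_anticomm (iotaA_ne_zero hβ) (iotaA_mul_iota_add_iota_mul_iotaA α β),
    inv_mul_mul_add_mul_of_anticomm (iotaB_ne_zero hβ) (iotaB_mul_iota_add_iota_mul_iotaB α β),
    DI, mul_add, two_mul]
  abel
end
end
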